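/- Let L be a commutative unital quantale, let (P, e) be an L-dcpo, and let x ∈ P. If there exists a directed L-subset D of P such that D ≤ ⇓x (pointwise) and ⊔D = x, then ⇓x is directed and ⊔⇓x = x. -/
import Mathlib


universe u

/-- A commutative unital quantale structure on a complete lattice `L`. -/
structure CommQuantale (L : Type u) [CompleteLattice L] : Type u where
  mul : L → L → L
  mul_comm : ∀ a b, mul a b = mul b a
  mul_assoc : ∀ a b c, mul (mul a b) c = mul a (mul b c)
  unit : L
  mul_unit : ∀ a, mul a unit = a
  mul_sSup : ∀ (a : L) (S : Set L), mul a (sSup S) = ⨆ s ∈ S, mul a s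

namespace CommQuantale

variable {L : Type u} [CompleteLattice L]

/-- The residuation `b → c`, the right adjoint of `⊗`. -/
def res (Q : CommQuantale L) (b c : L) : L := sSup {a | Q.mul a b ≤ c}

/-- `sub(A,B) = ⋀ₓ (A x → B x)` for `L`-subsets. -/
def subL (Q : CommQuantale L) {X : Type u} (A B : X → L) : L :=
  ⨅ x, Q.res (A x) (B x)

open Classical in
/-- The characteristic function `u_x`. -/
noncomputable def ux (Q : CommQuantale L) {X : Type u} (x : X) : X → L :=
  fun y => if y = x then Q.unit else ⊥

/-- `e` is an `L`-order on `P`. -/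
def IsLOrder (Q : CommQuantale L) {P : Type u} (e : P → P → L) : Prop :=
  (∀ x, Q.unit ≤ e x x) ∧
  (∀ x y z, Q.mul (e x y) (e y z) ≤ e x z) ∧
  (∀ x y, Q.unit ≤ e x y → Q.unit ≤ e y x → x = y)

/-- `D` is a directed `L`-subset of `(P, e)`. -/
def IsDirectedL (Q : CommQuantale L) {P : Type u} (e : P → P → L) (D : P → L) : Prop :=
  (Q.unit ≤ ⨆ x, D x) ∧
  (∀ x y, Q.mul (D x) (D y) ≤ ⨆ z, Q.mul (Q.mul (D z) (e x z)) (e y z))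

/-- `x₀` is the supremum `⊔A` of the `L`-subset `A`. -/
def IsSupL (Q : CommQuantale L) {P : Type u} (e : P → P → L) (A : P → L) (x₀ : P) : Prop :=
  ∀ y, e x₀ y = Q.subL A (fun x => e x y)

/-- `(P, e)` is an `L`-dcpo: every directed `L`-subset has a supremum. -/
def IsDcpoL (Q : CommQuantale L) {P : Type u} (e : P → P → L) : Prop :=
  ∀ D : P → L, Q.IsDirectedL e D → ∃ s, Q.IsSupL e D s

/-- `⇓x : P → L`, i.e. `⇓x(y) = ⋀_{D directed} (e(x, ⊔D) → ⋁_d D(d) ⊗ e(y,d))`. -/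
def wayBelow (Q : CommQuantale L) {P : Type u} (e : P → P → L) (x : P) : P → L := fun y =>
  ⨅ (D : P → L) (_ : Q.IsDirectedL e D) (s : P) (_ : Q.IsSupL e D s),
    Q.res (e x s) (⨆ d, Q.mul (D d) (e y d))

/-- `(P, e)` is a continuous `L`-dcpo. -/
def IsContinuousLDcpo (Q : CommQuantale L) {P : Type u} (e : P → P → L) : Prop :=
  Q.IsLOrder e ∧ Q.IsDcpoL e ∧
  ∀ x, Q.IsDirectedL e (Q.wayBelow e x) ∧ Q.IsSupL e (Q.wayBelow e x) x

open Classical in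
/-- `k(x)(y) = e(y,x)` if `y` is compact (i.e. `u ≤ ⇓y(y)`), else `0`. -/
noncomputable def kfun (Q : CommQuantale L) {P : Type u} (e : P → P → L) (x : P) : P → L :=
  fun y => if Q.unit ≤ Q.wayBelow e y y then e y x else ⊥

/-- `(P, e)` is an algebraic `L`-dcpo. -/
noncomputable def IsAlgebraicLDcpo (Q : CommQuantale L) {P : Type u} (e : P → P → L) : Prop :=
  Q.IsLOrder e ∧ Q.IsDcpoL e ∧
  ∀ x, Q.IsDirectedL e (Q.kfun e x) ∧ Q.IsSupL e (Q.kfun e x) x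

/-- `cl` is a generalized `L`-closure operator: (GC1) and (GC2). -/
def IsGenClosure (Q : CommQuantale L) {X : Type u} (cl : (X → L) → (X → L)) : Prop :=
  (∀ A B, Q.subL A B ≤ Q.subL (cl A) (cl B)) ∧
  (∀ A, cl (cl A) ≤ cl A)

/-- Interpolation conditions (IT1)-(IT3). -/
noncomputable def IsInterpolative (Q : CommQuantale L) {X : Type u}
    (cl : (X → L) → (X → L)) : Prop :=
  (∀ x, Q.unit ≤ ⨆ t, cl (Q.ux x) t) ∧
  (∀ x y, cl (Q.ux x) y ≤ ⨆ t, Q.mul (cl (Q.ux x) t) (cl (Q.ux t) y)) ∧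
  (∀ x a b, Q.mul (cl (Q.ux x) a) (cl (Q.ux x) b) ≤
    ⨆ t, Q.mul (Q.mul (cl (Q.ux x) t) (cl (Q.ux t) a)) (cl (Q.ux t) b))

/-- `U` is a directed closed set: (DC1)-(DC4). -/
noncomputable def IsDirClosed (Q : CommQuantale L) {X : Type u}
    (cl : (X → L) → (X → L)) (U : X → L) : Prop :=
  (Q.unit ≤ ⨆ x, U x) ∧
  (∀ x, U x ≤ Q.subL (cl (Q.ux x)) U) ∧
  (∀ x, U x ≤ ⨆ y, Q.mul (U y) (cl (Q.ux y) x)) ∧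
  (∀ x y, Q.mul (U x) (U y) ≤
    ⨆ z, Q.mul (Q.mul (U z) (cl (Q.ux z) x)) (cl (Q.ux z) y))

end CommQuantale

namespace CommQuantale

variable {L : Type u} [CompleteLattice L] (Q : CommQuantale L)

instance instAssocMul : Std.Associative Q.mul := ⟨Q.mul_assoc⟩
instance instCommMul : Std.Commutative Q.mul := ⟨Q.mul_comm⟩

lemma unit_mul (a : L) : Q.mul Q.unit a = a := by
  rw [Q.mul_comm]; exact Q.mul_unit a

lemma mul_le_mul_right' {a a' : L} (h : a ≤ a') (b : L) :
    Q.mul b a ≤ Q.mul b a' := by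
  have h1 : Q.mul b (sSup {a, a'}) = ⨆ s ∈ ({a, a'} : Set L), Q.mul b s := Q.mul_sSup b _
  have h2 : sSup ({a, a'} : Set L) = a' := by rw [sSup_pair]; exact sup_eq_right.mpr h
  rw [h2] at h1
  rw [h1]
  exact le_biSup _ (by simp)

lemma mul_le_mul' {a a' b b' : L} (h : a ≤ a') (h' : b ≤ b') :
    Q.mul a b ≤ Q.mul a' b' := by
  calc Q.mul a b ≤ Q.mul a b' := Q.mul_le_mul_right' h' a
  _ = Q.mul b' a := Q.mul_comm _ _
  _ ≤ Q.mul b' a' := Q.mul_le_mul_right' h b'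
  _ = Q.mul a' b' := Q.mul_comm _ _

lemma mul_iSup {ι : Sort*} (a : L) (f : ι → L) :
    Q.mul a (⨆ i, f i) = ⨆ i, Q.mul a (f i) := by
  rw [iSup, Q.mul_sSup, iSup_range]

lemma iSup_mul {ι : Sort*} (a : L) (f : ι → L) :
    Q.mul (⨆ i, f i) a = ⨆ i, Q.mul (f i) a := by
  rw [Q.mul_comm, Q.mul_iSup]
  exact iSup_congr fun i => Q.mul_comm _ _

lemma mul_res_le (b c : L) : Q.mul (Q.res b c) b ≤ c := by
  rw [Q.mul_comm, res, Q.mul_sSup]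
  exact iSup_le fun s => iSup_le fun hs => le_of_eq_of_le (Q.mul_comm b s) hs

lemma le_res_iff {a b c : L} : a ≤ Q.res b c ↔ Q.mul a b ≤ c := by
  constructor
  · intro h
    exact le_trans (Q.mul_le_mul' h le_rfl) (Q.mul_res_le b c)
  · intro h
    exact le_sSup h

lemma res_anti {b b' c : L} (h : b' ≤ b) : Q.res b c ≤ Q.res b' c := by
  rw [Q.le_res_iff]
  exact le_trans (Q.mul_le_mul' le_rfl h) (Q.mul_res_le b c)

end CommQuantale

open CommQuantale in
/-- If in an L-dcpo there is a directed L-subset D with D ≤ ⇓x and ⊔D = x,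
then ⇓x is directed and ⊔⇓x = x. -/
theorem stmt6 {L P : Type u} [CompleteLattice L] (Q : CommQuantale L)
    (e : P → P → L) (hord : Q.IsLOrder e) (hdcpo : Q.IsDcpoL e) (x : P)
    (D : P → L) (hD : Q.IsDirectedL e D)
    (hle : ∀ y, D y ≤ Q.wayBelow e x y) (hsup : Q.IsSupL e D x) :
    Q.IsDirectedL e (Q.wayBelow e x) ∧ Q.IsSupL e (Q.wayBelow e x) x := by
  obtain ⟨hrefl, htrans, _⟩ := hord
  set W := Q.wayBelow e x with hW
  have key : ∀ y, W y ≤ ⨆ d, Q.mul (D d) (e y d) := by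
    intro y
    have h1 : W y ≤ Q.res (e x x) (⨆ d, Q.mul (D d) (e y d)) := by
      rw [hW, wayBelow]
      exact le_trans (iInf_le _ D) (le_trans (iInf_le _ hD)
        (le_trans (iInf_le _ x) (iInf_le _ hsup)))
    calc W y = Q.mul (W y) Q.unit := (Q.mul_unit _).symm
    _ ≤ Q.mul (Q.res (e x x) (⨆ d, Q.mul (D d) (e y d))) (e x x) :=
        Q.mul_le_mul' h1 (hrefl x)
    _ ≤ _ := Q.mul_res_le _ _
  have Dle : ∀ d, D d ≤ e d x := by
    intro d
    have h1 : Q.unit ≤ Q.res (D d) (e d x) := by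
      calc Q.unit ≤ e x x := hrefl x
      _ = Q.subL D (fun z => e z x) := hsup x
      _ ≤ Q.res (D d) (e d x) := iInf_le _ d
    calc D d = Q.mul Q.unit (D d) := (Q.unit_mul _).symm
    _ ≤ Q.mul (Q.res (D d) (e d x)) (D d) := Q.mul_le_mul' h1 le_rfl
    _ ≤ e d x := Q.mul_res_le _ _
  have wble : ∀ z, W z ≤ e z x := by
    intro z
    refine le_trans (key z) (iSup_le fun d => ?_)
    calc Q.mul (D d) (e z d) ≤ Q.mul (e d x) (e z d) := Q.mul_le_mul' (Dle d) le_rfl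
    _ = Q.mul (e z d) (e d x) := Q.mul_comm _ _
    _ ≤ e z x := htrans _ _ _
  constructor
  · constructor
    · exact le_trans hD.1 (iSup_mono hle)
    · intro a b
      calc Q.mul (W a) (W b)
          ≤ Q.mul (⨆ d, Q.mul (D d) (e a d)) (⨆ d', Q.mul (D d') (e b d')) :=
            Q.mul_le_mul' (key a) (key b)
        _ = ⨆ d, ⨆ d', Q.mul (Q.mul (D d) (e a d)) (Q.mul (D d') (e b d')) := by
            rw [Q.iSup_mul]
            exact iSup_congr fun d => Q.mul_iSup _ _
        _ ≤ ⨆ z, Q.mul (Q.mul (W z) (e a z)) (e b z) := by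
            refine iSup_le fun d => iSup_le fun d' => ?_
            have h1 : Q.mul (Q.mul (D d) (e a d)) (Q.mul (D d') (e b d'))
                = Q.mul (Q.mul (D d) (D d')) (Q.mul (e a d) (e b d')) := by ac_rfl
            rw [h1]
            have h2 : Q.mul (Q.mul (D d) (D d')) (Q.mul (e a d) (e b d'))
                ≤ Q.mul (⨆ z, Q.mul (Q.mul (D z) (e d z)) (e d' z))
                    (Q.mul (e a d) (e b d')) :=
              Q.mul_le_mul' (hD.2 d d') le_rfl
            refine le_trans h2 ?_
            rw [Q.iSup_mul]
            refine iSup_le fun z => le_trans ?_ (le_iSup _ z)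
            have h3 : Q.mul (Q.mul (Q.mul (D z) (e d z)) (e d' z))
                  (Q.mul (e a d) (e b d'))
                = Q.mul (Q.mul (D z) (Q.mul (e a d) (e d z)))
                    (Q.mul (e b d') (e d' z)) := by ac_rfl
            rw [h3]
            exact Q.mul_le_mul' (Q.mul_le_mul' (hle z) (htrans a d z)) (htrans b d' z)
  · intro y
    apply le_antisymm
    · refine le_iInf fun z => ?_
      rw [Q.le_res_iff]
      calc Q.mul (e x y) (W z) ≤ Q.mul (e x y) (e z x) := Q.mul_le_mul' le_rfl (wble z)
      _ = Q.mul (e z x) (e x y) := Q.mul_comm _ _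
      _ ≤ e z y := htrans _ _ _
    · calc Q.subL W (fun z => e z y) ≤ Q.subL D (fun z => e z y) :=
          iInf_mono fun z => Q.res_anti (hle z)
      _ = e x y := (hsup y).symm
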